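/- Define Θ(z,w) = (ℓ^∞/2)·φ_+(z)·φ_−(w)/(z−w) and Θ̃(z̃,w̃) = (ℓ̃^∞/2)·φ̃_+(z̃)·φ̃_−(w̃)/(z̃−w̃), where ℓ̃^∞ = ℓ^∞·(ad−bc)/(c²·ω_+·ω_−). Then for all z, w ∈ ℂ with z ≠ w, c·z+d ≠ 0, c·w+d ≠ 0, and z, w both different from every z_r: Θ̃( f(z), f(w) ) · (ad−bc)/(c·z+d)² · (ad−bc)/(c·w+d)² = Θ(z,w). That is, Θ transforms as a bi-differential under the change of spectral parameter z̃ = f(z). -/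

import Mathlib

/-- The factorised twist function `φ_±(w) = ∏_i (w - ζ^±_i) / ∏_r (w - z_r)`. -/
noncomputable def phiFull (N : ℕ) (z ζ : Fin N → ℂ) (w : ℂ) : ℂ :=
  (∏ i, (w - ζ i)) / ∏ r, (w - z r)

/-- The factorised gauged twist function
`φ̃_±(z̃) = ∏_{i≤N} (z̃ - ζ̃^±_i) / ∏_{r≤N+1} (z̃ - z̃_r)`. -/
noncomputable def phiTFull (N : ℕ) (zt : Fin (N + 1) → ℂ) (ζt : Fin N → ℂ) (w : ℂ) : ℂ :=
  (∏ i, (w - ζt i)) / ∏ r, (w - zt r)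

/-!
A Möbius map `f(s) = (as+b)/(cs+d)` with `D = ad - bc` satisfies
`f(s) - f(t) = D (s-t) / ((cs+d)(ct+d))` and `f(s) - a/c = -D / (c(cs+d))`, the second
accounting for the extra pole `z̃_{N+1} = a/c = f(∞)`. Feeding these into the products
defining `φ̃_±` gives `φ̃_±(f s) = -(c(cs+d)/D) · ω_± · φ_±(s)`; the factors `cs+d` and `D`
then cancel against `f'(s) = D/(cs+d)²` and the normalisation of `ℓ̃^∞`.
-/

section Mobius

variable {K : Type*} [Field K] {a b c d : K}

theorem mobius_sub_mobius {s t : K} (hs : c * s + d ≠ 0) (ht : c * t + d ≠ 0) :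
    (a * s + b) / (c * s + d) - (a * t + b) / (c * t + d)
      = (a * d - b * c) * (s - t) / ((c * s + d) * (c * t + d)) := by
  rw [div_sub_div _ _ hs ht]
  ring

theorem mobius_sub_div {s : K} (hc : c ≠ 0) (hs : c * s + d ≠ 0) :
    (a * s + b) / (c * s + d) - a / c = -(a * d - b * c) / (c * (c * s + d)) := by
  rw [div_sub_div _ _ hs hc, div_eq_div_iff (mul_ne_zero hs hc) (mul_ne_zero hc hs)]
  ring

theorem prod_mobius_sub_mobius {ι : Type*} [Fintype ι] {ζ : ι → K} {s : K}
    (hs : c * s + d ≠ 0) (hζ : ∀ i, c * ζ i + d ≠ 0) :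
    ∏ i, ((a * s + b) / (c * s + d) - (a * ζ i + b) / (c * ζ i + d))
      = (a * d - b * c) ^ Fintype.card ι * (∏ i, (s - ζ i))
        / ((c * s + d) ^ Fintype.card ι * ∏ i, (c * ζ i + d)) := by
  simp_rw [mobius_sub_mobius hs (hζ _)]
  rw [Finset.prod_div_distrib, Finset.prod_mul_distrib, Finset.prod_mul_distrib,
    Finset.prod_const, Finset.prod_const, Finset.card_univ]

end Mobius

theorem phiTFull_mobius {N : ℕ} {z ζ : Fin N → ℂ} {zt : Fin (N + 1) → ℂ} {a b c d : ℂ}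
    (hdet : a * d - b * c ≠ 0) (hc : c ≠ 0)
    (hz : ∀ r, c * z r + d ≠ 0) (hζ : ∀ i, c * ζ i + d ≠ 0)
    (hzt : ∀ r : Fin N, zt r.castSucc = (a * z r + b) / (c * z r + d))
    (hztlast : zt (Fin.last N) = a / c) {s : ℂ} (hs : c * s + d ≠ 0) :
    phiTFull N zt (fun i => (a * ζ i + b) / (c * ζ i + d)) ((a * s + b) / (c * s + d))
      = -(c * (c * s + d) / (a * d - b * c))
        * ((∏ r, (c * z r + d)) / ∏ i, (c * ζ i + d)) * phiFull N z ζ s := by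
  have hZz : ∏ r, (c * z r + d) ≠ 0 := Finset.prod_ne_zero_iff.mpr fun r _ => hz r
  have hZζ : ∏ i, (c * ζ i + d) ≠ 0 := Finset.prod_ne_zero_iff.mpr fun i _ => hζ i
  rw [phiTFull, phiFull, Fin.prod_univ_castSucc, hztlast]
  simp only [hzt]
  rw [prod_mobius_sub_mobius hs hζ, prod_mobius_sub_mobius hs hz, mobius_sub_div hc hs,
    Fintype.card_fin]
  field_simp

theorem statement10_general (N : ℕ) (z : Fin N → ℂ)
    (ζp ζm : Fin N → ℂ)
    (linf : ℂ)
    (a b c d : ℝ) (hdet : (a : ℂ) * d - b * c ≠ 0) (hc : (c : ℂ) ≠ 0)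
    (hzfin : ∀ r, (c : ℂ) * z r + d ≠ 0)
    (hζpfin : ∀ i, (c : ℂ) * ζp i + d ≠ 0) (hζmfin : ∀ i, (c : ℂ) * ζm i + d ≠ 0)
    (f : ℂ → ℂ) (hf : ∀ v, f v = ((a : ℂ) * v + b) / ((c : ℂ) * v + d))
    (zt : Fin (N + 1) → ℂ) (hzt : ∀ r : Fin N, zt r.castSucc = f (z r))
    (hztlast : zt (Fin.last N) = (a : ℂ) / c)
    (ωp ωm : ℂ)
    (hωp : ωp = (∏ r, ((c : ℂ) * z r + d)) / ∏ i, ((c : ℂ) * ζp i + d))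
    (hωm : ωm = (∏ r, ((c : ℂ) * z r + d)) / ∏ i, ((c : ℂ) * ζm i + d))
    (ltinf : ℂ)
    (hltinf : ltinf = linf * ((a : ℂ) * d - b * c) / ((c : ℂ) ^ 2 * ωp * ωm))
    (u v : ℂ)
    (hu1 : (c : ℂ) * u + d ≠ 0) (hv1 : (c : ℂ) * v + d ≠ 0) :
    (ltinf / 2 * phiTFull N zt (fun i => f (ζp i)) (f u)
        * phiTFull N zt (fun i => f (ζm i)) (f v) / (f u - f v))
      * (((a : ℂ) * d - b * c) / ((c : ℂ) * u + d) ^ 2)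
      * (((a : ℂ) * d - b * c) / ((c : ℂ) * v + d) ^ 2)
    = linf / 2 * phiFull N z ζp u * phiFull N z ζm v / (u - v) := by
  obtain rfl : f = fun s => ((a : ℂ) * s + b) / ((c : ℂ) * s + d) := funext hf
  have hZz : ∏ r, ((c : ℂ) * z r + d) ≠ 0 := Finset.prod_ne_zero_iff.mpr fun r _ => hzfin r
  have hωp0 : ωp ≠ 0 := hωp ▸ div_ne_zero hZz (Finset.prod_ne_zero_iff.mpr fun i _ => hζpfin i)
  have hωm0 : ωm ≠ 0 := hωm ▸ div_ne_zero hZz (Finset.prod_ne_zero_iff.mpr fun i _ => hζmfin i)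
  rw [phiTFull_mobius hdet hc hzfin hζpfin hzt hztlast hu1, ← hωp,
    phiTFull_mobius hdet hc hzfin hζmfin hzt hztlast hv1, ← hωm, mobius_sub_mobius hu1 hv1, hltinf]
  field_simp

/-- The quantity `Θ(z,w) = (ℓ^∞/2) φ_+(z) φ_-(w)/(z-w)` transforms as a bi-differential
under the change of spectral parameter `z̃ = f(z)`:
`Θ̃(f(z), f(w)) · (ad-bc)/(cz+d)² · (ad-bc)/(cw+d)² = Θ(z,w)`, where
`Θ̃(z̃,w̃) = (ℓ̃^∞/2) φ̃_+(z̃) φ̃_-(w̃)/(z̃-w̃)` and `ℓ̃^∞ = ℓ^∞ (ad-bc)/(c² ω_+ ω_-)`. -/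
theorem statement10 (N : ℕ) (hN : 1 ≤ N) (z : Fin N → ℂ) (hz : Function.Injective z)
    (ζp ζm : Fin N → ℂ) (hζp : ∀ i r, ζp i ≠ z r) (hζm : ∀ i r, ζm i ≠ z r)
    (linf : ℂ)
    (a b c d : ℝ) (hdet : (a : ℂ) * d - b * c ≠ 0) (hc : (c : ℂ) ≠ 0)
    (hzfin : ∀ r, (c : ℂ) * z r + d ≠ 0)
    (hζpfin : ∀ i, (c : ℂ) * ζp i + d ≠ 0) (hζmfin : ∀ i, (c : ℂ) * ζm i + d ≠ 0)
    (f : ℂ → ℂ) (hf : ∀ v, f v = ((a : ℂ) * v + b) / ((c : ℂ) * v + d))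
    (zt : Fin (N + 1) → ℂ) (hzt : ∀ r : Fin N, zt r.castSucc = f (z r))
    (hztlast : zt (Fin.last N) = (a : ℂ) / c)
    (ωp ωm : ℂ)
    (hωp : ωp = (∏ r, ((c : ℂ) * z r + d)) / ∏ i, ((c : ℂ) * ζp i + d))
    (hωm : ωm = (∏ r, ((c : ℂ) * z r + d)) / ∏ i, ((c : ℂ) * ζm i + d))
    (ltinf : ℂ)
    (hltinf : ltinf = linf * ((a : ℂ) * d - b * c) / ((c : ℂ) ^ 2 * ωp * ωm))
    (u v : ℂ) (huv : u ≠ v)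
    (hu1 : (c : ℂ) * u + d ≠ 0) (hv1 : (c : ℂ) * v + d ≠ 0)
    (hu2 : ∀ r, u ≠ z r) (hv2 : ∀ r, v ≠ z r) :
    (ltinf / 2 * phiTFull N zt (fun i => f (ζp i)) (f u)
        * phiTFull N zt (fun i => f (ζm i)) (f v) / (f u - f v))
      * (((a : ℂ) * d - b * c) / ((c : ℂ) * u + d) ^ 2)
      * (((a : ℂ) * d - b * c) / ((c : ℂ) * v + d) ^ 2)
    = linf / 2 * phiFull N z ζp u * phiFull N z ζm v / (u - v) :=
  statement10_general N z ζp ζm linf a b c d hdet hc hzfin hζpfin hζmfin f hf zt hzt hztlast ωp ωm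
    hωp hωm ltinf hltinf u v hu1 hv1
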